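/- Let F : [a,b] → K(ℝ^d) be of bounded variation with compact graph, and suppose F is continuous (in the Hausdorff metric) at ξ ∈ (a,b). Then F has Property 2 at ξ: for every metric pair (y⁻, y⁺) ∈ Π(F(ξ−), F(ξ+)) there exist sequences ξ_n⁻ < ξ < ξ_n⁺ with ξ_n⁻, ξ_n⁺ → ξ and points (y_n⁻, y_n⁺) ∈ Π(F(ξ_n⁻), F(ξ_n⁺)) with y_n⁻ → y⁻ and y_n⁺ → y⁺. -/

import Mathlib

open Filter Metric Topology Set TopologicalSpace

noncomputable section

/-- The set of projections of `x` on `B`: points of `B` nearest to `x`. -/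
def metricProj {E : Type*} [MetricSpace E] (x : E) (B : Set E) : Set E :=
  {b ∈ B | dist x b = Metric.infDist x B}

/-- The set of metric pairs of `A` and `B`. -/
def MetricPairs {E : Type*} [MetricSpace E] (A B : Set E) : Set (E × E) :=
  {p | p.1 ∈ A ∧ p.2 ∈ B ∧ (p.1 ∈ metricProj p.2 A ∨ p.2 ∈ metricProj p.1 B)}

/-- A partition `a = x_0 < x_1 < ... < x_n = b` of `[a,b]`. -/
structure ItvPartition (a b : ℝ) where
  n : ℕ
  pts : Fin (n + 1) → ℝ
  mono : StrictMono pts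
  first : pts 0 = a
  last : pts (Fin.last n) = b

/-- The norm `|χ| = max_i (x_{i+1} - x_i)` of a partition. -/
noncomputable def ItvPartition.meshNorm {a b : ℝ} (χ : ItvPartition a b) : ℝ :=
  ⨆ i : Fin χ.n, (χ.pts i.succ - χ.pts i.castSucc)

/-- `c` is a chain function of the set-valued function `F` based on the partition `χ`:
it is piecewise constant, with values at consecutive partition points forming metric pairs
of the corresponding values of `F`. -/
def IsChainFun {E : Type*} [MetricSpace E] {a b : ℝ}
    (F : ℝ → Set E) (χ : ItvPartition a b) (c : ℝ → E) : Prop :=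
  ∃ y : Fin (χ.n + 1) → E,
    (∀ i : Fin χ.n,
      (y i.castSucc, y i.succ) ∈ MetricPairs (F (χ.pts i.castSucc)) (F (χ.pts i.succ))) ∧
    (∀ i : Fin χ.n, ∀ t ∈ Set.Ico (χ.pts i.castSucc) (χ.pts i.succ), c t = y i.castSucc) ∧
    c b = y (Fin.last χ.n)

/-- `s` is a metric selection of `F` on `[a,b]`: a selection of `F` which is the pointwise
limit of a sequence of chain functions of `F` whose partition norms tend to `0`. -/
def IsMetricSelection {E : Type*} [MetricSpace E] (F : ℝ → Set E) (a b : ℝ) (s : ℝ → E) : Prop :=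
  (∀ x ∈ Set.Icc a b, s x ∈ F x) ∧
  ∃ χ : ℕ → ItvPartition a b, ∃ c : ℕ → ℝ → E,
    (∀ k, IsChainFun F (χ k) (c k)) ∧
    Filter.Tendsto (fun k => (χ k).meshNorm) Filter.atTop (nhds 0) ∧
    ∀ x ∈ Set.Icc a b, Filter.Tendsto (fun k => c k x) Filter.atTop (nhds (s x))

/-- Property 2 of `F` at `ξ`, with `Fm = F(ξ-)`, `Fp = F(ξ+)`: every metric pair of the
one-sided limits is a limit of metric pairs `(y_n^-, y_n^+) ∈ Π(F(ξ_n^-), F(ξ_n^+))`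
with `ξ_n^- < ξ < ξ_n^+`, `ξ_n^± → ξ`. -/
def Property2 {E : Type*} [MetricSpace E] (F : ℝ → Set E) (a b ξ : ℝ)
    (Fm Fp : Set E) : Prop :=
  ∀ ym yp : E, (ym, yp) ∈ MetricPairs Fm Fp →
    ∃ ξm ξp : ℕ → ℝ, ∃ ym' yp' : ℕ → E,
      (∀ n, ξm n ∈ Set.Ico a ξ) ∧ (∀ n, ξp n ∈ Set.Ioc ξ b) ∧
      Filter.Tendsto ξm Filter.atTop (nhds ξ) ∧ Filter.Tendsto ξp Filter.atTop (nhds ξ) ∧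
      (∀ n, (ym' n, yp' n) ∈ MetricPairs (F (ξm n)) (F (ξp n))) ∧
      Filter.Tendsto ym' Filter.atTop (nhds ym) ∧ Filter.Tendsto yp' Filter.atTop (nhds yp)

/-- The metric average `(1/2) A ⊕ (1/2) B = {(a+b)/2 : (a,b) ∈ Π(A,B)}`. -/
def metricAvg {E : Type*} [NormedAddCommGroup E] [NormedSpace ℝ E] (A B : Set E) : Set E :=
  {v | ∃ p ∈ MetricPairs A B, v = (2⁻¹ : ℝ) • (p.1 + p.2)}

/-- The limit set `A_F(x) = {(s(x-) + s(x+))/2 : s a metric selection of F}`. -/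
def limitSet {E : Type*} [NormedAddCommGroup E] [NormedSpace ℝ E]
    (F : ℝ → Set E) (a b x : ℝ) : Set E :=
  {v | ∃ s : ℝ → E, ∃ sm sp : E, IsMetricSelection F a b s ∧
      Filter.Tendsto s (nhdsWithin x (Set.Ico a x)) (nhds sm) ∧
      Filter.Tendsto s (nhdsWithin x (Set.Ioc x b)) (nhds sp) ∧
      v = (2⁻¹ : ℝ) • (sm + sp)}

/-- The left local quasi-modulus `ω̃⁻(f, xs, δ)` of `f` at `xs`, where `fl = f(xs-)`. -/
noncomputable def qmodLeft {X : Type*} [PseudoMetricSpace X]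
    (f : ℝ → X) (fl : X) (a b xs δ : ℝ) : ℝ :=
  sSup {r | ∃ x ∈ Set.Ico (xs - δ) xs ∩ Set.Icc a b, r = dist fl (f x)}

/-- The right local quasi-modulus `ω̃⁺(f, xs, δ)` of `f` at `xs`, where `fr = f(xs+)`. -/
noncomputable def qmodRight {X : Type*} [PseudoMetricSpace X]
    (f : ℝ → X) (fr : X) (a b xs δ : ℝ) : ℝ :=
  sSup {r | ∃ x ∈ Set.Ioc xs (xs + δ) ∩ Set.Icc a b, r = dist fr (f x)}

/-- The graph of a set-valued function on `[a,b]` is compact. -/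
def HasCompactGraph {E : Type*} [MetricSpace E] (F : ℝ → Set E) (a b : ℝ) : Prop :=
  IsCompact {p : ℝ × E | p.1 ∈ Set.Icc a b ∧ p.2 ∈ F p.1}

/-- The (real-valued) variation function `v_f(x) = V_a^x(f)`. -/
noncomputable def varFun {X : Type*} [PseudoEMetricSpace X] (f : ℝ → X) (a x : ℝ) : ℝ :=
  (eVariationOn f (Set.Icc a x)).toReal

/-- Upper Kuratowski limit of a sequence of sets in a topological space. -/
def kuratowskiLimsup {X : Type*} [TopologicalSpace X] (C : ℕ → Set X) : Set X :=
  {x | ∃ φ : ℕ → ℕ, StrictMono φ ∧ ∃ c : ℕ → X,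
    (∀ k, c k ∈ C (φ k)) ∧ Filter.Tendsto c Filter.atTop (nhds x)}

section MetricPairs

variable {E : Type*} [MetricSpace E]

theorem eq_of_mem_metricPairs_self {A : Set E} {x y : E} (h : (x, y) ∈ MetricPairs A A) :
    x = y := by
  obtain ⟨hx, hy, ⟨-, hxy⟩ | ⟨-, hxy⟩⟩ := h
  · rw [infDist_zero_of_mem hy] at hxy
    exact (dist_eq_zero.mp hxy).symm
  · rw [infDist_zero_of_mem hx] at hxy
    exact dist_eq_zero.mp hxy

theorem TopologicalSpace.NonemptyCompacts.exists_mem_metricPairs (K L : NonemptyCompacts E)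
    {x : E} (hx : x ∈ K) : ∃ y, (x, y) ∈ MetricPairs (K : Set E) L ∧ dist x y ≤ dist K L := by
  obtain ⟨y, hy, hxy⟩ := L.isCompact.exists_infDist_eq_dist L.nonempty x
  refine ⟨y, ⟨hx, hy, Or.inr ⟨hy, hxy.symm⟩⟩, ?_⟩
  rw [← hxy, NonemptyCompacts.dist_eq]
  exact infDist_le_hausdorffDist_of_mem hx (edist_ne_top K L)

/-- Take `u n ∈ K n` nearest to `y`, then `v n ∈ L n` nearest to `u n`. -/
theorem exists_tendsto_of_mem_metricPairs_of_tendsto {K L : ℕ → NonemptyCompacts E}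
    {M : NonemptyCompacts E} (hK : Tendsto K atTop (𝓝 M)) (hL : Tendsto L atTop (𝓝 M))
    {y : E} (hy : y ∈ M) :
    ∃ u v : ℕ → E, (∀ n, (u n, v n) ∈ MetricPairs (K n : Set E) (L n)) ∧
      Tendsto u atTop (𝓝 y) ∧ Tendsto v atTop (𝓝 y) := by
  choose u hu hyu using fun n => M.exists_mem_metricPairs (K n) hy
  choose v huv hdist using fun n => (K n).exists_mem_metricPairs (L n) (hu n).2.1
  have hu_lim : Tendsto u atTop (𝓝 y) := by
    refine tendsto_iff_dist_tendsto_zero.mpr (squeeze_zero (fun _ => dist_nonneg)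
      (fun n => ?_) (tendsto_iff_dist_tendsto_zero.mp hK))
    simpa only [dist_comm] using hyu n
  have hKL : Tendsto (fun n => dist (K n) (L n)) atTop (𝓝 0) := by
    simpa using hK.dist hL
  exact ⟨u, v, huv, hu_lim,
    hu_lim.congr_dist (squeeze_zero (fun _ => dist_nonneg) hdist hKL)⟩

end MetricPairs

theorem property2_of_continuousWithinAt {E : Type*} [MetricSpace E]
    {F : ℝ → NonemptyCompacts E} {a b ξ : ℝ} (hξ : ξ ∈ Ioo a b)
    (hcont : ContinuousWithinAt F (Icc a b) ξ) :
    Property2 (fun t => (F t : Set E)) a b ξ (F ξ) (F ξ) := by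
  intro y y' hyy'
  obtain rfl := eq_of_mem_metricPairs_self hyy'
  obtain ⟨tm, htm, htm_lim⟩ := mem_closure_iff_seq_limit.mp
    (mem_closure_iff_nhdsWithin_neBot.mpr (right_nhdsWithin_Ico_neBot hξ.1))
  obtain ⟨tp, htp, htp_lim⟩ := mem_closure_iff_seq_limit.mp
    (mem_closure_iff_nhdsWithin_neBot.mpr (left_nhdsWithin_Ioc_neBot hξ.2))
  have hF_lim {t : ℕ → ℝ} (ht : ∀ n, t n ∈ Icc a b) (ht_lim : Tendsto t atTop (𝓝 ξ)) :
      Tendsto (F ∘ t) atTop (𝓝 (F ξ)) :=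
    hcont.tendsto.comp (tendsto_nhdsWithin_iff.mpr ⟨ht_lim, Eventually.of_forall ht⟩)
  obtain ⟨u, v, huv, hu, hv⟩ := exists_tendsto_of_mem_metricPairs_of_tendsto
    (hF_lim (fun n => ⟨(htm n).1, (htm n).2.le.trans hξ.2.le⟩) htm_lim)
    (hF_lim (fun n => ⟨hξ.1.le.trans (htp n).1.le, (htp n).2⟩) htp_lim) hyy'.1
  exact ⟨tm, tp, u, v, htm, htp, htm_lim, htp_lim, huv, hu, hv⟩

theorem stmt_12_general {d : ℕ} (a b : ℝ)
    (F : ℝ → NonemptyCompacts (EuclideanSpace ℝ (Fin d)))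
    (ξ : ℝ) (hξ : ξ ∈ Set.Ioo a b)
    (hcont : ContinuousWithinAt F (Set.Icc a b) ξ)
    (Fm Fp : NonemptyCompacts (EuclideanSpace ℝ (Fin d)))
    (hFm : Filter.Tendsto F (nhdsWithin ξ (Set.Ico a ξ)) (nhds Fm))
    (hFp : Filter.Tendsto F (nhdsWithin ξ (Set.Ioc ξ b)) (nhds Fp)) :
    Property2 (fun t => (F t : Set (EuclideanSpace ℝ (Fin d)))) a b ξ
      (Fm : Set (EuclideanSpace ℝ (Fin d))) (Fp : Set (EuclideanSpace ℝ (Fin d))) := by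
  have := right_nhdsWithin_Ico_neBot hξ.1
  have := left_nhdsWithin_Ioc_neBot hξ.2
  obtain rfl : Fm = F ξ :=
    tendsto_nhds_unique hFm (hcont.mono fun t ht => ⟨ht.1, ht.2.le.trans hξ.2.le⟩)
  obtain rfl : Fp = F ξ :=
    tendsto_nhds_unique hFp (hcont.mono fun t ht => ⟨hξ.1.le.trans ht.1.le, ht.2⟩)
  exact property2_of_continuousWithinAt hξ hcont

/-- if `F` is continuous at `ξ`, then `F` has Property 2 at `ξ`. -/
theorem stmt_12 {d : ℕ} (a b : ℝ) (hab : a < b)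
    (F : ℝ → NonemptyCompacts (EuclideanSpace ℝ (Fin d)))
    (hBV : BoundedVariationOn F (Set.Icc a b))
    (hgraph : HasCompactGraph (fun t => (F t : Set (EuclideanSpace ℝ (Fin d)))) a b)
    (ξ : ℝ) (hξ : ξ ∈ Set.Ioo a b)
    (hcont : ContinuousWithinAt F (Set.Icc a b) ξ)
    (Fm Fp : NonemptyCompacts (EuclideanSpace ℝ (Fin d)))
    (hFm : Filter.Tendsto F (nhdsWithin ξ (Set.Ico a ξ)) (nhds Fm))
    (hFp : Filter.Tendsto F (nhdsWithin ξ (Set.Ioc ξ b)) (nhds Fp)) :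
    Property2 (fun t => (F t : Set (EuclideanSpace ℝ (Fin d)))) a b ξ
      (Fm : Set (EuclideanSpace ℝ (Fin d))) (Fp : Set (EuclideanSpace ℝ (Fin d))) :=
  stmt_12_general a b F ξ hξ hcont Fm Fp hFm hFp
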